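/- arXiv:2011.07752 — 4 statements merged into one kernel-verified Lean document; each statement's English description precedes it below -/
import Mathlib

section
/- Let H = (V,𝓔) be a hypergraph as above, let S ⊆ V with vol(S) > 0, γ > 0, let x = x(γ,S) be the minimizer of Q, and let x₀ = 1_S/vol(S) ∈ ℝ^V. Then for every sweep set S_j^x with 0 < vol(S_j^x) < M, with σ_j = ( 1 + 2 max_{e∈∂S_j^x} min{δ_e, |e|/2} )^{-1} (and σ_j = 1 if ∂S_j^x = ∅), I_x(vol(S_j^x)) ≤ (γ/(2+γ)) I_{x₀}(vol(S_j^x)) + (1/(2+γ)) [ I_x( vol(S_j^x) − σ_j cut_H(S_j^x) ) + I_x( vol(S_j^x) + σ_j cut_H(S_j^x) ) ]. Moreover, I_x(k) ≤ I_{x₀}(k) for every k ∈ [0, M]. -/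
open Finset

noncomputable section

/-- δ-linear splitting penalty of the set `S` within hyperedge `ε`:
`f_ε(e_ε ∩ S) = min {|e_ε ∩ S|, |e_ε ∖ S|, δ_ε}`. -/
def hsplit {V E : Type*} [DecidableEq V] (e : E → Finset V) (δe : E → ℝ)
    (ε : E) (S : Finset V) : ℝ :=
  min (min ((e ε ∩ S).card : ℝ) ((e ε \ S).card : ℝ)) (δe ε)

/-- Hypergraph cut `cut_H(S) = Σ_ε f_ε(e_ε ∩ S)`. -/
def hcut {V E : Type*} [Fintype E] [DecidableEq V] (e : E → Finset V) (δe : E → ℝ)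
    (S : Finset V) : ℝ :=
  ∑ ε : E, hsplit e δe ε S

/-- Degree `d_v = Σ_{ε : v ∈ e_ε} f_ε({v})`. -/
def hdeg {V E : Type*} [Fintype E] [DecidableEq V] (e : E → Finset V) (δe : E → ℝ)
    (v : V) : ℝ :=
  ∑ ε ∈ univ.filter (fun ε => v ∈ e ε), hsplit e δe ε {v}

/-- Volume `vol(S) = Σ_{v∈S} d_v`. -/
def hvol {V E : Type*} [Fintype E] [DecidableEq V] (e : E → Finset V) (δe : E → ℝ)
    (S : Finset V) : ℝ :=
  ∑ v ∈ S, hdeg e δe v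

/-- Total volume `M = vol(V)`. -/
def hM {V E : Type*} [Fintype V] [Fintype E] [DecidableEq V] (e : E → Finset V)
    (δe : E → ℝ) : ℝ :=
  hvol e δe univ

/-- Hypergraph conductance `φ(S) = cut_H(S) / min(vol S, M − vol S)`. -/
def hcond {V E : Type*} [Fintype V] [Fintype E] [DecidableEq V] (e : E → Finset V)
    (δe : E → ℝ) (S : Finset V) : ℝ :=
  hcut e δe S / min (hvol e δe S) (hM e δe - hvol e δe S)

/-- Inner gadget objective of hyperedge `ε`:
`Σ_{v∈e_ε} ((x_v−a)₊² + (b−x_v)₊²) + δ_ε (a−b)₊²`. -/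
def innerQ {V E : Type*} [DecidableEq V] (e : E → Finset V) (δe : E → ℝ) (ε : E)
    (x : V → ℝ) (a b : ℝ) : ℝ :=
  ∑ v ∈ e ε, ((max (x v - a) 0) ^ 2 + (max (b - x v) 0) ^ 2)
    + δe ε * (max (a - b) 0) ^ 2

/-- `Q_ε(x) = min_{a,b∈ℝ} innerQ`. -/
def Qe {V E : Type*} [DecidableEq V] (e : E → Finset V) (δe : E → ℝ) (ε : E)
    (x : V → ℝ) : ℝ :=
  sInf {q : ℝ | ∃ a b : ℝ, q = innerQ e δe ε x a b}

/-- The diffusion objective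
`Q(x) = γ Σ_v d_v (x_v − 1_S(v)/vol S)² + Σ_ε Q_ε(x)` for a seed set `S`. -/
def Qobj {V E : Type*} [Fintype V] [Fintype E] [DecidableEq V] (e : E → Finset V)
    (δe : E → ℝ) (γ : ℝ) (S : Finset V) (x : V → ℝ) : ℝ :=
  γ * ∑ v : V, hdeg e δe v * (x v - (if v ∈ S then 1 else 0) / hvol e δe S) ^ 2
    + ∑ ε : E, Qe e δe ε x

end

open Finset in
/-- Cumulative volume of the first `j` vertices in the order `σ`. -/
noncomputable def cumVol {V : Type*} {n : ℕ} (σ : Fin n ≃ V) (d : V → ℝ) (j : ℕ) : ℝ :=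
  ∑ i ∈ univ.filter (fun i : Fin n => (i : ℕ) < j), d (σ i)

open Finset in
/-- The Lovász–Simonovits curve of `x` with respect to a (decreasingly sorted)
enumeration `σ`: the piecewise-linear function on `[0,M]` with `I_x(0) = 0`,
breakpoints `I_x(vol S_j) = Σ_{v∈S_j} d_v x_v`, and linear interpolation in between. -/
noncomputable def LScurve {V : Type*} {n : ℕ} (σ : Fin n ≃ V) (d x : V → ℝ)
    (k : ℝ) : ℝ :=
  ∑ i : Fin n,
    x (σ i) * (min k (cumVol σ d ((i : ℕ) + 1)) - min k (cumVol σ d (i : ℕ)))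

open Finset in
/-- The sweep set consisting of the first `j` vertices in the order `σ`. -/
def sweepSet {V : Type*} [DecidableEq V] {n : ℕ} (σ : Fin n ≃ V) (j : ℕ) : Finset V :=
  (univ.filter (fun i : Fin n => (i : ℕ) < j)).image σ

/-- The boundary of `T`: hyperedges cut by `T`. -/
def hbdry {V E : Type*} [DecidableEq V] (e : E → Finset V) (T : Finset V) : Set E :=
  {ε | (e ε ∩ T).Nonempty ∧ (e ε \ T).Nonempty}

/-- `δ̄(T) = max_{ε ∈ ∂T} min{δ_ε, |e_ε|/2}` (with value `0` if `∂T = ∅`). -/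
noncomputable def deltaBar {V E : Type*} [DecidableEq V] (e : E → Finset V)
    (δe : E → ℝ) (T : Finset V) : ℝ :=
  sSup ((fun ε => min (δe ε) (((e ε).card : ℝ) / 2)) '' hbdry e T)

/-!
Fix for every hyperedge an optimal pair `(a_ε, b_ε)` of the inner problem defining `Q_ε(x)`, and
let `φ_ε(t) = (t - a_ε)₊ - (b_ε - t)₊` be the flow from a vertex of value `t` into that gadget.
Stationarity in `a_ε` and `b_ε` gives
`Σ_{w ∈ e} (x_w - a_ε)₊ = δ_ε (a_ε - b_ε) = Σ_{w ∈ e} (b_ε - x_w)₊`, so each gadget has zero net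
flow, and stationarity in `x_v` gives `γ d_v (x_v - x₀_v) = -Σ_{ε ∋ v} φ_ε(x_v)`.

Summed over a sweep set `T`, `γ Σ_T d (x - x₀)` is minus the flow leaving `T`. On a cut hyperedge
this flow is at least `σ_j f_ε(T) (min_{e ∩ T} x - max_{e ∖ T} x)`: either one side of the cut
already lies beyond the gadget interval `[b_ε, a_ε]`, or the whole gadget flow `δ_ε (a_ε - b_ε)`
crosses the cut, and then `f_ε(T) ≤ min(|e ∩ T|, |e ∖ T|, δ_ε)` bounds each of the three pieces of
the gap. Taking mass `σ_j f_ε(T)` off the lowest vertex of `e ∩ T`, or adding it to the highest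
vertex of `e ∖ T`, yields fractional vertex selections of volume `vol T ∓ σ_j cut(T)`, and the LS
curve dominates every fractional selection of the same volume because it fills the largest
entries first.

For the second claim, clipping shows `0 ≤ x ≤ 1 / vol S`, and summing stationarity over all
vertices gives `Σ_v d_v x_v = 1`; hence `I_x(k) ≤ min(k, vol S) / vol S ≤ I_{x₀}(k)`.
-/

section Clip

def clip (lo hi t : ℝ) : ℝ := max lo (min hi t)

variable {lo hi : ℝ}

lemma clip_mono : Monotone (clip lo hi) :=
  fun _ _ h => max_le_max le_rfl (min_le_min le_rfl h)

lemma clip_sub_clip_le {r s : ℝ} (h : r ≤ s) : clip lo hi s - clip lo hi r ≤ s - r := by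
  simp only [clip, max_def, min_def]
  split_ifs <;> linarith

lemma clip_eq_self {t : ℝ} (ht : t ∈ Set.Icc lo hi) : clip lo hi t = t := by
  simp [clip, ht.1, ht.2]

lemma clip_mem (h : lo ≤ hi) (t : ℝ) : clip lo hi t ∈ Set.Icc lo hi :=
  ⟨le_max_left _ _, max_le h (min_le_left _ _)⟩

lemma sq_max_clip_sub_clip_le (r s : ℝ) :
    max (clip lo hi s - clip lo hi r) 0 ^ 2 ≤ max (s - r) 0 ^ 2 := by
  refine pow_le_pow_left₀ (le_max_right _ _) (max_le ?_ (le_max_right _ _)) 2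
  rcases le_total r s with h | h
  · exact (clip_sub_clip_le h).trans (le_max_left _ _)
  · exact (sub_nonpos.2 (clip_mono h)).trans (le_max_right _ _)

lemma sq_clip_sub_le {s t : ℝ} (ht : t ∈ Set.Icc lo hi) :
    (clip lo hi s - t) ^ 2 ≤ (s - t) ^ 2 := by
  rcases le_total t s with h | h
  · have h1 := clip_sub_clip_le (lo := lo) (hi := hi) h
    have h2 := clip_mono (lo := lo) (hi := hi) h
    rw [clip_eq_self ht] at h1 h2
    nlinarith
  · have h1 := clip_sub_clip_le (lo := lo) (hi := hi) h
    have h2 := clip_mono (lo := lo) (hi := hi) h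
    rw [clip_eq_self ht] at h1 h2
    nlinarith

lemma sq_clip_sub_lt {s t : ℝ} (ht : t ∈ Set.Icc lo hi) (hs : s ∉ Set.Icc lo hi) :
    (clip lo hi s - t) ^ 2 < (s - t) ^ 2 := by
  simp only [Set.mem_Icc, not_and_or, not_le] at hs
  obtain ⟨htlo, hthi⟩ := ht
  rcases hs with hs | hs
  · rw [clip, min_eq_right (by linarith), max_eq_left hs.le]; nlinarith
  · rw [clip, min_eq_left hs.le, max_eq_right (by linarith)]; nlinarith

end Clip

lemma hasDerivAt_max_zero_sq (t : ℝ) :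
    HasDerivAt (fun s : ℝ => max s 0 ^ 2) (2 * max t 0) t := by
  rcases lt_trichotomy t 0 with ht | rfl | ht
  · have hev : (fun s : ℝ => max s 0 ^ 2) =ᶠ[nhds t] fun _ => 0 := by
      filter_upwards [Iio_mem_nhds ht] with s hs
      simp [max_eq_right (Set.mem_Iio.1 hs).le]
    simpa [max_eq_right ht.le] using (hasDerivAt_const t (0 : ℝ)).congr_of_eventuallyEq hev
  · rw [hasDerivAt_iff_isLittleO]
    have hO : (fun s : ℝ => max s 0 ^ 2) =O[nhds 0] fun s => s ^ 2 :=
      Asymptotics.IsBigO.of_bound 1 (Filter.Eventually.of_forall fun s => by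
        rw [one_mul, Real.norm_eq_abs, Real.norm_eq_abs, abs_of_nonneg (by positivity),
          abs_of_nonneg (sq_nonneg s)]
        rcases le_total s 0 with h | h
        · simp [max_eq_right h, sq_nonneg]
        · simp [max_eq_left h])
    simpa using hO.trans_isLittleO (Asymptotics.isLittleO_pow_id one_lt_two)
  · have hev : (fun s : ℝ => max s 0 ^ 2) =ᶠ[nhds t] fun s => s ^ 2 := by
      filter_upwards [Ioi_mem_nhds ht] with s hs
      simp [max_eq_left (Set.mem_Ioi.1 hs).le]
    simpa [max_eq_left ht.le, mul_comm] using (hasDerivAt_pow 2 t).congr_of_eventuallyEq hev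

lemma hasDerivAt_comp_update_apply {V : Type*} [DecidableEq V] {f : ℝ → ℝ} {f' : ℝ}
    {x : V → ℝ} {v : V} (hf : HasDerivAt f f' (x v)) (w : V) :
    HasDerivAt (fun s => f (Function.update x v s w)) (if w = v then f' else 0) (x v) := by
  by_cases h : w = v
  · subst h; simpa using hf
  · simpa [Function.update_of_ne h, h] using hasDerivAt_const (x v) (f (x w))

lemma sum_mul_le_sum_mul_of_sum_eq {ι : Type*} {s : Finset ι} {p q y : ι → ℝ}
    (hsum : ∑ i ∈ s, p i = ∑ i ∈ s, q i)
    (hy : ∀ i ∈ s, ∀ j ∈ s, p i < q i → q j < p j → y j ≤ y i) :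
    ∑ i ∈ s, p i * y i ≤ ∑ i ∈ s, q i * y i := by
  classical
  by_cases hA : ∃ i ∈ s, p i < q i
  · obtain ⟨i₀, hi₀, h₀⟩ := hA
    -- `c` separates the indices gaining weight from those losing it
    set c := (s.filter fun i => p i < q i).inf' ⟨i₀, mem_filter.2 ⟨hi₀, h₀⟩⟩ y
    have hlo : ∀ i ∈ s, p i < q i → c ≤ y i := fun i hi h => inf'_le _ (mem_filter.2 ⟨hi, h⟩)
    have hhi : ∀ j ∈ s, q j < p j → y j ≤ c := fun j hj h =>
      le_inf' _ _ fun i hi => hy i (mem_filter.1 hi).1 j hj (mem_filter.1 hi).2 h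
    have key : ∀ i ∈ s, 0 ≤ (q i - p i) * (y i - c) := by
      intro i hi
      rcases lt_trichotomy (p i) (q i) with h | h | h
      · exact mul_nonneg (by linarith) (by linarith [hlo i hi h])
      · simp [h]
      · exact mul_nonneg_of_nonpos_of_nonpos (by linarith) (by linarith [hhi i hi h])
    have hc : ∑ i ∈ s, (q i - p i) * c = 0 := by
      rw [← sum_mul, sum_sub_distrib, hsum, sub_self, zero_mul]
    have hexp : ∑ i ∈ s, (q i - p i) * (y i - c)
        = ∑ i ∈ s, q i * y i - ∑ i ∈ s, p i * y i - ∑ i ∈ s, (q i - p i) * c := by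
      rw [← sum_sub_distrib, ← sum_sub_distrib]
      exact sum_congr rfl fun i _ => by ring
    rw [hc, sub_zero] at hexp
    linarith [sum_nonneg key]
  · simp only [not_exists, not_and, not_lt] at hA
    have hzero := (sum_eq_zero_iff_of_nonneg (s := s) (f := fun i => p i - q i)
      fun i hi => sub_nonneg.2 (hA i hi)).1 (by rw [sum_sub_distrib, hsum, sub_self])
    exact (sum_congr rfl fun i hi => by rw [sub_eq_zero.1 (hzero i hi)]).le

section LovaszSimonovits

variable {V : Type*} {n : ℕ} (σ : Fin n ≃ V) {d : V → ℝ}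

noncomputable def lsWeight (d : V → ℝ) (k : ℝ) (i : Fin n) : ℝ :=
  min k (cumVol σ d (i + 1)) - min k (cumVol σ d i)

lemma LScurve_eq_sum_lsWeight (y : V → ℝ) (k : ℝ) :
    LScurve σ d y k = ∑ i, lsWeight σ d k i * y (σ i) :=
  sum_congr rfl fun _ _ => mul_comm _ _

lemma cumVol_zero : cumVol σ d 0 = 0 := by simp [cumVol]

lemma cumVol_succ (i : Fin n) : cumVol σ d (i + 1) = cumVol σ d i + d (σ i) := by
  have hset : univ.filter (fun i' : Fin n => (i' : ℕ) < i + 1)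
      = insert i (univ.filter fun i' : Fin n => (i' : ℕ) < i) := by
    ext i'
    simp only [mem_filter, mem_univ, true_and, mem_insert, Nat.lt_succ_iff_lt_or_eq, Fin.val_inj]
    tauto
  rw [cumVol, hset, sum_insert (by simp), add_comm]
  rfl

lemma cumVol_mono (hd : ∀ v, 0 ≤ d v) : Monotone (cumVol σ d) := fun _ _ h =>
  sum_le_sum_of_subset_of_nonneg (monotone_filter_right _ fun _ _ hi => lt_of_lt_of_le hi h)
    fun _ _ _ => hd _

lemma cumVol_self [Fintype V] : cumVol σ d n = ∑ v, d v := by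
  rw [cumVol, filter_true_of_mem fun i _ => i.isLt]
  exact Equiv.sum_comp σ d

lemma sum_sweepSet [DecidableEq V] (j : ℕ) : ∑ v ∈ sweepSet σ j, d v = cumVol σ d j :=
  sum_image fun _ _ _ _ h => σ.injective h

lemma mem_sweepSet [DecidableEq V] {v : V} {j : ℕ} : v ∈ sweepSet σ j ↔ (σ.symm v : ℕ) < j := by
  simp only [sweepSet, mem_image, mem_filter, mem_univ, true_and]
  exact ⟨fun ⟨i, hi, hv⟩ => hv ▸ by simpa using hi, fun h => ⟨σ.symm v, h, σ.apply_symm_apply v⟩⟩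

lemma le_of_mem_sweepSet [DecidableEq V] {y : V → ℝ} (hy : ∀ i j, i ≤ j → y (σ j) ≤ y (σ i))
    {j : ℕ} {v u : V} (hv : v ∈ sweepSet σ j) (hu : u ∉ sweepSet σ j) : y u ≤ y v := by
  rw [mem_sweepSet] at hv hu
  simpa using hy (σ.symm v) (σ.symm u) (Fin.le_def.2 (by omega))

lemma lsWeight_nonneg (hd : ∀ v, 0 ≤ d v) (k : ℝ) (i : Fin n) : 0 ≤ lsWeight σ d k i :=
  sub_nonneg.2 (min_le_min le_rfl (by rw [cumVol_succ]; linarith [hd (σ i)]))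

lemma lsWeight_le (hd : ∀ v, 0 ≤ d v) (k : ℝ) (i : Fin n) : lsWeight σ d k i ≤ d (σ i) := by
  have := hd (σ i)
  simp only [lsWeight, cumVol_succ, min_def]
  split_ifs <;> linarith

lemma cumVol_lt_of_lsWeight_pos {k : ℝ} {i : Fin n} (h : 0 < lsWeight σ d k i) :
    cumVol σ d i < k := by
  by_contra! hk
  rw [lsWeight, min_eq_left hk] at h
  linarith [min_le_left k (cumVol σ d (i + 1))]

lemma lt_cumVol_of_lsWeight_lt (hd : ∀ v, 0 ≤ d v) {k : ℝ} {i : Fin n}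
    (h : lsWeight σ d k i < d (σ i)) : k < cumVol σ d (i + 1) := by
  by_contra! hk
  have hi : cumVol σ d i ≤ k := (cumVol_mono σ hd (Nat.le_succ _)).trans hk
  rw [lsWeight, min_eq_right hk, min_eq_right hi, cumVol_succ] at h
  linarith

lemma sum_lsWeight [Fintype V] {k : ℝ} (hk : 0 ≤ k) :
    ∑ i, lsWeight σ d k i = min k (∑ v, d v) := by
  rw [← cumVol_self σ, ← sub_zero (min k _), ← min_eq_right hk, ← cumVol_zero σ (d := d),
    ← sum_range_sub (fun i => min k (cumVol σ d i))]
  exact Fin.sum_univ_eq_sum_range (fun i => min k (cumVol σ d (i + 1)) - min k (cumVol σ d i)) n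

lemma LScurve_cumVol (hd : ∀ v, 0 ≤ d v) [DecidableEq V] (y : V → ℝ) (j : ℕ) :
    LScurve σ d y (cumVol σ d j) = ∑ v ∈ sweepSet σ j, d v * y v := by
  have hw : ∀ i : Fin n, lsWeight σ d (cumVol σ d j) i = if (i : ℕ) < j then d (σ i) else 0 := by
    intro i
    split_ifs with h
    · rw [lsWeight, min_eq_right (cumVol_mono σ hd (by omega : (i : ℕ) + 1 ≤ j)),
        min_eq_right (cumVol_mono σ hd h.le), cumVol_succ, add_sub_cancel_left]
    · rw [lsWeight, min_eq_left (cumVol_mono σ hd (by omega : j ≤ (i : ℕ) + 1)),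
        min_eq_left (cumVol_mono σ hd (not_lt.1 h)), sub_self]
  simp only [LScurve_eq_sum_lsWeight, hw, ite_mul, zero_mul, ← sum_filter, sweepSet]
  rw [sum_image fun _ _ _ _ h => σ.injective h]

lemma LScurve_mono (hd : ∀ v, 0 ≤ d v) {y : V → ℝ} (hy : ∀ v, 0 ≤ y v) :
    Monotone (LScurve σ d y) := by
  intro k k' hk
  simp only [LScurve_eq_sum_lsWeight]
  refine sum_le_sum fun i _ => mul_le_mul_of_nonneg_right ?_ (hy _)
  have := hd (σ i)
  simp only [lsWeight, cumVol_succ, min_def]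
  split_ifs <;> linarith

variable [Fintype V]

lemma sum_mul_le_LScurve (hd : ∀ v, 0 ≤ d v) {y : V → ℝ}
    (hy : ∀ i j, i ≤ j → y (σ j) ≤ y (σ i)) {w : V → ℝ} (hw : ∀ v, w v ∈ Set.Icc 0 (d v)) :
    ∑ v, w v * y v ≤ LScurve σ d y (∑ v, w v) := by
  set κ := ∑ v, w v
  have hκ : 0 ≤ κ := sum_nonneg fun v _ => (hw v).1
  rw [LScurve_eq_sum_lsWeight, ← Equiv.sum_comp σ]
  refine sum_mul_le_sum_mul_of_sum_eq ?_ fun i _ j _ hi hj => hy i j ?_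
  · rw [sum_lsWeight σ hκ, Equiv.sum_comp σ w,
      min_eq_left (sum_le_sum fun v _ => (hw v).2)]
  · have h1 := cumVol_lt_of_lsWeight_pos σ ((hw _).1.trans_lt hi)
    have h2 := lt_cumVol_of_lsWeight_lt σ hd (hj.trans_le (hw _).2)
    by_contra! hji
    linarith [cumVol_mono σ hd (Nat.succ_le_of_lt hji)]

lemma LScurve_le_mul (hd : ∀ v, 0 ≤ d v) {y : V → ℝ} {B k : ℝ} (hB : 0 ≤ B) (hk : 0 ≤ k)
    (hy : ∀ v, y v ≤ B) : LScurve σ d y k ≤ B * k :=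
  calc LScurve σ d y k ≤ ∑ i, lsWeight σ d k i * B := by
        rw [LScurve_eq_sum_lsWeight]
        exact sum_le_sum fun i _ => mul_le_mul_of_nonneg_left (hy _) (lsWeight_nonneg σ hd k i)
    _ = B * min k (∑ v, d v) := by rw [← sum_mul, sum_lsWeight σ hk, mul_comm]
    _ ≤ B * k := mul_le_mul_of_nonneg_left (min_le_left _ _) hB

lemma LScurve_le_sum (hd : ∀ v, 0 ≤ d v) {y : V → ℝ} (hy : ∀ v, 0 ≤ y v) (k : ℝ) :
    LScurve σ d y k ≤ ∑ v, d v * y v := by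
  rw [LScurve_eq_sum_lsWeight, ← Equiv.sum_comp σ]
  exact sum_le_sum fun i _ => mul_le_mul_of_nonneg_right (lsWeight_le σ hd k i) (hy _)

variable [DecidableEq V]

lemma mul_sum_le_LScurve (hd : ∀ v, 0 ≤ d v) {y : V → ℝ}
    (hy : ∀ i j, i ≤ j → y (σ j) ≤ y (σ i)) {θ : ℝ} (hθ : θ ∈ Set.Icc 0 1) (T : Finset V) :
    θ * ∑ v ∈ T, d v * y v ≤ LScurve σ d y (θ * ∑ v ∈ T, d v) := by
  have hw : ∀ v, (if v ∈ T then θ * d v else 0) ∈ Set.Icc 0 (d v) := by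
    intro v
    split_ifs
    · exact ⟨mul_nonneg hθ.1 (hd v), mul_le_of_le_one_left (hd v) hθ.2⟩
    · exact ⟨le_rfl, hd v⟩
  have := sum_mul_le_LScurve σ hd hy hw
  simp only [ite_mul, zero_mul, sum_ite_mem, univ_inter] at this
  rwa [mul_sum, mul_sum, ← sum_congr rfl fun v _ => mul_assoc θ (d v) (y v)]

theorem LScurve_le_LScurve_of_sum_eq (σ₀ : Fin n ≃ V) (hd : ∀ v, 0 ≤ d v) {S : Finset V}
    (hS : 0 < ∑ v ∈ S, d v)
    {β : ℝ} {y z : V → ℝ} (hy : ∀ v, y v ∈ Set.Icc 0 β)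
    (hmass : ∑ v, d v * y v = β * ∑ v ∈ S, d v) (hz : ∀ v, z v = if v ∈ S then β else 0)
    (hσ₀ : ∀ i j, i ≤ j → z (σ₀ j) ≤ z (σ₀ i)) {k : ℝ} (hk : 0 ≤ k) :
    LScurve σ d y k ≤ LScurve σ₀ d z k := by
  set vol := ∑ v ∈ S, d v
  have hβ : 0 ≤ β := by
    obtain ⟨v, -⟩ := nonempty_of_sum_ne_zero hS.ne'
    exact (hy v).1.trans (hy v).2
  have hzS : ∑ v ∈ S, d v * z v = β * vol := by
    rw [mul_sum]
    exact sum_congr rfl fun v hv => by rw [hz, if_pos hv, mul_comm]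
  have hupper : LScurve σ d y k ≤ β * min k vol := by
    rw [mul_min_of_nonneg _ _ hβ, ← hmass]
    exact le_min (LScurve_le_mul σ hd hβ hk fun v => (hy v).2)
      (LScurve_le_sum σ hd (fun v => (hy v).1) k)
  refine hupper.trans ?_
  rcases le_total k vol with h | h
  · rw [min_eq_left h]
    have := mul_sum_le_LScurve σ₀ hd hσ₀ ⟨div_nonneg hk hS.le, (div_le_one hS).2 h⟩ S
    rwa [hzS, div_mul_cancel₀ _ hS.ne', mul_left_comm, div_mul_cancel₀ _ hS.ne'] at this
  · have := mul_sum_le_LScurve σ₀ hd hσ₀ ⟨zero_le_one, le_rfl⟩ S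
    rw [one_mul, one_mul, hzS] at this
    rw [min_eq_right h]
    exact this.trans (LScurve_mono σ₀ hd (fun v => by rw [hz]; split_ifs <;> simp [hβ]) h)

variable {ι : Type*} [Fintype ι]

lemma sum_fiber_mul (m : ι → ℝ) (p : ι → V) (y : V → ℝ) :
    ∑ v, (∑ i with p i = v, m i) * y v = ∑ i, m i * y (p i) := by
  simp_rw [sum_mul]
  rw [← sum_fiberwise univ p fun i => m i * y (p i)]
  exact sum_congr rfl fun v _ => sum_congr rfl fun i hi => by rw [(mem_filter.1 hi).2]

lemma sum_sub_sum_le_LScurve (hd : ∀ v, 0 ≤ d v) {y : V → ℝ}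
    (hy : ∀ i j, i ≤ j → y (σ j) ≤ y (σ i)) {T : Finset V} {m : ι → ℝ} {p : ι → V}
    (hm : ∀ i, 0 ≤ m i) (hp : ∀ i, m i ≠ 0 → p i ∈ T)
    (hcap : ∀ v, ∑ i with p i = v, m i ≤ d v) :
    ∑ v ∈ T, d v * y v - ∑ i, m i * y (p i) ≤ LScurve σ d y (∑ v ∈ T, d v - ∑ i, m i) := by
  set w := fun v => (if v ∈ T then d v else 0) - ∑ i with p i = v, m i
  have hw : ∀ v, w v ∈ Set.Icc 0 (d v) := by
    intro v
    have h0 : 0 ≤ ∑ i with p i = v, m i := sum_nonneg fun i _ => hm i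
    by_cases hv : v ∈ T
    · simp only [w, if_pos hv]; constructor <;> linarith [hcap v]
    · have : ∑ i with p i = v, m i = 0 := sum_eq_zero fun i hi => by
        by_contra h; exact hv ((mem_filter.1 hi).2 ▸ hp i h)
      simp only [w, if_neg hv, this]; simp [hd v]
  have := sum_mul_le_LScurve σ hd hy hw
  simpa only [w, sub_mul, sum_sub_distrib, sum_fiber_mul, ite_mul, zero_mul, sum_ite_mem,
    univ_inter, sum_fiberwise] using this

lemma sum_add_sum_le_LScurve (hd : ∀ v, 0 ≤ d v) {y : V → ℝ}
    (hy : ∀ i j, i ≤ j → y (σ j) ≤ y (σ i)) {T : Finset V} {m : ι → ℝ} {p : ι → V}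
    (hm : ∀ i, 0 ≤ m i) (hp : ∀ i, m i ≠ 0 → p i ∉ T)
    (hcap : ∀ v, ∑ i with p i = v, m i ≤ d v) :
    ∑ v ∈ T, d v * y v + ∑ i, m i * y (p i) ≤ LScurve σ d y (∑ v ∈ T, d v + ∑ i, m i) := by
  set w := fun v => (if v ∈ T then d v else 0) + ∑ i with p i = v, m i
  have hw : ∀ v, w v ∈ Set.Icc 0 (d v) := by
    intro v
    have h0 : 0 ≤ ∑ i with p i = v, m i := sum_nonneg fun i _ => hm i
    by_cases hv : v ∈ T
    · have : ∑ i with p i = v, m i = 0 := sum_eq_zero fun i hi => by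
        by_contra h; exact hp i h ((mem_filter.1 hi).2 ▸ hv)
      simp only [w, if_pos hv, this]; simp [hd v]
    · simp only [w, if_neg hv]; constructor <;> linarith [hcap v]
  have := sum_mul_le_LScurve σ hd hy hw
  simpa only [w, add_mul, sum_add_distrib, sum_fiber_mul, ite_mul, zero_mul, sum_ite_mem,
    univ_inter, sum_fiberwise] using this

end LovaszSimonovits

section Hypergraph

variable {V E : Type*} [DecidableEq V] {e : E → Finset V} {δe : E → ℝ}

lemma hsplit_nonneg {ε : E} (hδ : 0 ≤ δe ε) (S : Finset V) : 0 ≤ hsplit e δe ε S :=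
  le_min (le_min (by positivity) (by positivity)) hδ

lemma hsplit_le_min (ε : E) (S : Finset V) :
    hsplit e δe ε S ≤ min (δe ε) ((e ε).card / 2) := by
  have hcard : ((e ε ∩ S).card : ℝ) + (e ε \ S).card = (e ε).card := by
    exact_mod_cast card_inter_add_card_sdiff (e ε) S
  have h1 : hsplit e δe ε S ≤ (e ε ∩ S).card := (min_le_left _ _).trans (min_le_left _ _)
  have h2 : hsplit e δe ε S ≤ (e ε \ S).card := (min_le_left _ _).trans (min_le_right _ _)
  exact le_min (min_le_right _ _) (by linarith)

lemma hsplit_singleton {ε : E} (hcard : 2 ≤ (e ε).card) (hδ : 1 ≤ δe ε) {v : V}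
    (hv : v ∈ e ε) : hsplit e δe ε {v} = 1 := by
  have h1 : (1 : ℝ) ≤ (e ε \ {v}).card := by
    rw [card_sdiff_of_subset (singleton_subset_iff.2 hv), card_singleton]
    exact_mod_cast (by omega : 1 ≤ (e ε).card - 1)
  rw [hsplit, inter_eq_right.2 (singleton_subset_iff.2 hv), card_singleton, Nat.cast_one,
    min_eq_left h1, min_eq_left hδ]

lemma hsplit_eq_zero_of_notMem_hbdry {ε : E} (hδ : 0 ≤ δe ε) {S : Finset V}
    (h : ε ∉ hbdry e S) : hsplit e δe ε S = 0 := by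
  refine le_antisymm ?_ (hsplit_nonneg hδ S)
  simp only [hbdry, Set.mem_ofPred_eq, not_and_or, not_nonempty_iff_eq_empty] at h
  rcases h with h | h <;> simp [hsplit, h, hδ]

variable [Fintype E]

lemma hdeg_eq_card (hcard : ∀ ε, 2 ≤ (e ε).card) (hδe : ∀ ε, 1 ≤ δe ε) (v : V) :
    hdeg e δe v = #{ε | v ∈ e ε} := by
  rw [hdeg, sum_congr rfl fun ε hε => hsplit_singleton (hcard ε) (hδe ε) (mem_filter.1 hε).2]
  simp

lemma hdeg_nonneg (hδe : ∀ ε, 0 ≤ δe ε) (v : V) : 0 ≤ hdeg e δe v :=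
  sum_nonneg fun ε _ => hsplit_nonneg (hδe ε) _

lemma one_le_hdeg (hcard : ∀ ε, 2 ≤ (e ε).card) (hδe : ∀ ε, 1 ≤ δe ε)
    (hcov : ∀ v : V, ∃ ε, v ∈ e ε) (v : V) : 1 ≤ hdeg e δe v := by
  obtain ⟨ε, hε⟩ := hcov v
  rw [hdeg_eq_card hcard hδe, Nat.one_le_cast, Nat.one_le_iff_ne_zero, Ne, card_eq_zero,
    ← ne_eq, ← nonempty_iff_ne_empty]
  exact ⟨ε, mem_filter.2 ⟨mem_univ _, hε⟩⟩

lemma sum_fiber_le_hdeg (hcard : ∀ ε, 2 ≤ (e ε).card) (hδe : ∀ ε, 1 ≤ δe ε) {m : E → ℝ}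
    {p : E → V} (hm : ∀ ε, m ε ∈ Set.Icc 0 1) (hp : ∀ ε, m ε ≠ 0 → p ε ∈ e ε) (v : V) :
    ∑ ε with p ε = v, m ε ≤ hdeg e δe v := by
  rw [hdeg_eq_card hcard hδe, ← sum_boole, sum_filter]
  refine sum_le_sum fun ε _ => ?_
  split_ifs with h1 h2 h2
  · exact (hm ε).2
  · by_cases h0 : m ε = 0
    · exact h0.le
    · exact absurd (h1 ▸ hp ε h0) h2
  · exact zero_le_one
  · exact le_rfl

end Hypergraph

section Boundary

variable {V E : Type*} [DecidableEq V] {e : E → Finset V} {δe : E → ℝ}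

lemma deltaBar_nonneg (hδe : ∀ ε, 0 ≤ δe ε) (T : Finset V) : 0 ≤ deltaBar e δe T :=
  Real.sSup_nonneg (by rintro _ ⟨ε, _, rfl⟩; exact le_min (hδe ε) (by positivity))

lemma le_deltaBar [Finite E] {T : Finset V} {ε : E} (hε : ε ∈ hbdry e T) :
    min (δe ε) ((e ε).card / 2) ≤ deltaBar e δe T :=
  le_csSup (Set.toFinite _).bddAbove ⟨ε, hε, rfl⟩

-- `σ_j f_ε(T)`, the mass that the cut hyperedge `ε` moves across `T`
noncomputable def edgeMass (e : E → Finset V) (δe : E → ℝ) (T : Finset V) (ε : E) : ℝ :=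
  (1 + 2 * deltaBar e δe T)⁻¹ * hsplit e δe ε T

lemma edgeMass_le_min [Finite E] (hcard : ∀ ε, 2 ≤ (e ε).card) (hδe : ∀ ε, 1 ≤ δe ε) {T : Finset V}
    {ε : E} (hε : ε ∈ hbdry e T) :
    edgeMass e δe T ε ≤ min 1 (hsplit e δe ε T / 3) := by
  have hc0 := hsplit_nonneg (zero_le_one.trans (hδe ε)) (e := e) T
  have hcδ := (hsplit_le_min ε T).trans (le_deltaBar (δe := δe) hε)
  have hδ1 : 1 ≤ deltaBar e δe T := by
    refine le_trans (le_min (hδe ε) ?_) (le_deltaBar hε)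
    have : (2 : ℝ) ≤ (e ε).card := by exact_mod_cast hcard ε
    linarith
  rw [edgeMass, inv_mul_eq_div]
  refine le_min ((div_le_one (by linarith)).2 (by linarith)) ?_
  exact div_le_div_of_nonneg_left hc0 (by norm_num) (by linarith)

lemma edgeMass_eq_zero_of_notMem (hδe : ∀ ε, 0 ≤ δe ε) {T : Finset V} {ε : E}
    (hε : ε ∉ hbdry e T) : edgeMass e δe T ε = 0 := by
  rw [edgeMass, hsplit_eq_zero_of_notMem_hbdry (hδe ε) hε, mul_zero]

lemma edgeMass_mem_Icc [Finite E] (hcard : ∀ ε, 2 ≤ (e ε).card) (hδe : ∀ ε, 1 ≤ δe ε) (T : Finset V)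
    (ε : E) : edgeMass e δe T ε ∈ Set.Icc 0 1 := by
  have hδ0 : ∀ ε, 0 ≤ δe ε := fun ε => zero_le_one.trans (hδe ε)
  by_cases hε : ε ∈ hbdry e T
  · exact ⟨mul_nonneg (inv_nonneg.2 (by linarith [deltaBar_nonneg hδ0 (e := e) T]))
      (hsplit_nonneg (hδ0 ε) T), (edgeMass_le_min hcard hδe hε).trans (min_le_left _ _)⟩
  · rw [edgeMass_eq_zero_of_notMem hδ0 hε]
    exact ⟨le_rfl, zero_le_one⟩

lemma sum_edgeMass [Fintype E] (T : Finset V) :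
    ∑ ε, edgeMass e δe T ε = (1 + 2 * deltaBar e δe T)⁻¹ * hcut e δe T :=
  (mul_sum _ _ _).symm

end Boundary

section Gadget

variable {V E : Type*} [DecidableEq V] {e : E → Finset V} {δe : E → ℝ} {ε : E}

def IsInnerQMin (e : E → Finset V) (δe : E → ℝ) (ε : E) (x : V → ℝ) (a b : ℝ) : Prop :=
  ∀ a' b', innerQ e δe ε x a b ≤ innerQ e δe ε x a' b'

-- the flow from a vertex of value `t` into the gadget with auxiliary values `a` and `b`
def edgeFlow (a b t : ℝ) : ℝ := max (t - a) 0 - max (b - t) 0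

lemma edgeFlow_mono (a b : ℝ) : Monotone (edgeFlow a b) := fun _ _ h =>
  sub_le_sub (max_le_max (by linarith) le_rfl) (max_le_max (by linarith) le_rfl)

lemma innerQ_nonneg (hδ : 0 ≤ δe ε) (x : V → ℝ) (a b : ℝ) : 0 ≤ innerQ e δe ε x a b := by
  unfold innerQ; positivity

lemma Qe_le_innerQ (hδ : 0 ≤ δe ε) (x : V → ℝ) (a b : ℝ) : Qe e δe ε x ≤ innerQ e δe ε x a b :=
  csInf_le ⟨0, by rintro _ ⟨a', b', rfl⟩; exact innerQ_nonneg hδ x a' b'⟩ ⟨a, b, rfl⟩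

lemma le_Qe {q : ℝ} (x : V → ℝ) (h : ∀ a b, q ≤ innerQ e δe ε x a b) : q ≤ Qe e δe ε x :=
  le_csInf ⟨_, 0, 0, rfl⟩ (by rintro _ ⟨a, b, rfl⟩; exact h a b)

lemma IsInnerQMin.Qe_eq (hδ : 0 ≤ δe ε) {x : V → ℝ} {a b : ℝ} (h : IsInnerQMin e δe ε x a b) :
    Qe e δe ε x = innerQ e δe ε x a b :=
  le_antisymm (Qe_le_innerQ hδ x a b) (le_Qe x h)

lemma innerQ_clip_le (hδ : 0 ≤ δe ε) (lo hi : ℝ) (x : V → ℝ) (a b : ℝ) :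
    innerQ e δe ε (fun v => clip lo hi (x v)) (clip lo hi a) (clip lo hi b)
      ≤ innerQ e δe ε x a b :=
  add_le_add (sum_le_sum fun _ _ =>
      add_le_add (sq_max_clip_sub_clip_le _ _) (sq_max_clip_sub_clip_le _ _))
    (mul_le_mul_of_nonneg_left (sq_max_clip_sub_clip_le _ _) hδ)

lemma Qe_clip_le (hδ : 0 ≤ δe ε) (lo hi : ℝ) (x : V → ℝ) :
    Qe e δe ε (fun v => clip lo hi (x v)) ≤ Qe e δe ε x :=
  le_Qe x fun a b => (Qe_le_innerQ hδ _ _ _).trans (innerQ_clip_le hδ lo hi x a b)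

lemma exists_isInnerQMin [Fintype V] (hδ : 0 ≤ δe ε) (x : V → ℝ) :
    ∃ a b, IsInnerQMin e δe ε x a b := by
  -- clipping to a box containing all values of `x` shows that the minimum over the box is global
  set R := ∑ v, |x v|
  have hx : ∀ v, x v ∈ Set.Icc (-R) R := fun v =>
    abs_le.1 (single_le_sum (fun v _ => abs_nonneg (x v)) (mem_univ v))
  have hR : -R ≤ R := by linarith [show 0 ≤ R from sum_nonneg fun v _ => abs_nonneg (x v)]
  have hcont : Continuous fun q : ℝ × ℝ => innerQ e δe ε x q.1 q.2 := by
    unfold innerQ; fun_prop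
  obtain ⟨q, -, hq⟩ := ((isCompact_Icc (a := -R) (b := R)).prod
    (isCompact_Icc (a := -R) (b := R))).exists_isMinOn ⟨(-R, -R), ⟨le_rfl, hR⟩, ⟨le_rfl, hR⟩⟩
    hcont.continuousOn
  have hclip : (fun v => clip (-R) R (x v)) = x := funext fun v => clip_eq_self (hx v)
  refine ⟨q.1, q.2, fun a' b' => ?_⟩
  have := innerQ_clip_le (e := e) hδ (-R) R x a' b'
  rw [hclip] at this
  exact (isMinOn_iff.1 hq (_, _) ⟨clip_mem hR a', clip_mem hR b'⟩).trans this

end Gadget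

section Stationarity

variable {V E : Type*} [DecidableEq V] {e : E → Finset V} {δe : E → ℝ} {ε : E}
  {x : V → ℝ} {a b : ℝ}

lemma hasDerivAt_innerQ_left (x : V → ℝ) (a b : ℝ) :
    HasDerivAt (fun α => innerQ e δe ε x α b)
      (∑ w ∈ e ε, -(2 * max (x w - a) 0) + δe ε * (2 * max (a - b) 0)) a := by
  have hΔ : HasDerivAt (fun α => δe ε * max (α - b) 0 ^ 2) (δe ε * (2 * max (a - b) 0)) a := by
    simpa using ((hasDerivAt_max_zero_sq _).comp a ((hasDerivAt_id a).sub_const b)).const_mul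
      (δe ε)
  refine (HasDerivAt.fun_sum fun w _ => ?_).add hΔ
  simpa using ((hasDerivAt_max_zero_sq _).comp a ((hasDerivAt_id a).const_sub (x w))).add_const
    (max (b - x w) 0 ^ 2)

lemma hasDerivAt_innerQ_right (x : V → ℝ) (a b : ℝ) :
    HasDerivAt (fun β => innerQ e δe ε x a β)
      (∑ w ∈ e ε, 2 * max (b - x w) 0 + δe ε * -(2 * max (a - b) 0)) b := by
  have hΔ : HasDerivAt (fun β => δe ε * max (a - β) 0 ^ 2) (δe ε * -(2 * max (a - b) 0)) b := by
    simpa using ((hasDerivAt_max_zero_sq _).comp b ((hasDerivAt_id b).const_sub a)).const_mul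
      (δe ε)
  refine (HasDerivAt.fun_sum fun w _ => ?_).add hΔ
  simpa using ((hasDerivAt_max_zero_sq _).comp b ((hasDerivAt_id b).sub_const (x w))).const_add
    (max (x w - a) 0 ^ 2)

lemma hasDerivAt_innerQ_update (x : V → ℝ) (v : V) (a b : ℝ) :
    HasDerivAt (fun s => innerQ e δe ε (Function.update x v s) a b)
      (if v ∈ e ε then 2 * edgeFlow a b (x v) else 0) (x v) := by
  have hv : HasDerivAt (fun t => max (t - a) 0 ^ 2 + max (b - t) 0 ^ 2)
      (2 * edgeFlow a b (x v)) (x v) := by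
    have h1 : HasDerivAt (fun t => max (t - a) 0 ^ 2) (2 * max (x v - a) 0) (x v) := by
      simpa [Function.comp_def] using
        (hasDerivAt_max_zero_sq _).comp (x v) ((hasDerivAt_id _).sub_const a)
    have h2 : HasDerivAt (fun t => max (b - t) 0 ^ 2) (-(2 * max (b - x v) 0)) (x v) := by
      simpa [Function.comp_def] using
        (hasDerivAt_max_zero_sq _).comp (x v) ((hasDerivAt_id _).const_sub b)
    rw [edgeFlow, mul_sub, sub_eq_add_neg]
    exact h1.add h2
  have := (HasDerivAt.fun_sum fun w (_ : w ∈ e ε) => hasDerivAt_comp_update_apply hv w).add_const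
    (δe ε * max (a - b) 0 ^ 2)
  rwa [sum_ite_eq'] at this

lemma IsInnerQMin.sum_excess_eq (h : IsInnerQMin e δe ε x a b) :
    ∑ w ∈ e ε, max (x w - a) 0 = δe ε * max (a - b) 0 := by
  have := (IsLocalMin.hasDerivAt_eq_zero (Filter.Eventually.of_forall fun α => h α b)
    (hasDerivAt_innerQ_left x a b))
  rw [sum_neg_distrib, ← mul_sum] at this
  linarith

lemma IsInnerQMin.sum_deficit_eq (h : IsInnerQMin e δe ε x a b) :
    ∑ w ∈ e ε, max (b - x w) 0 = δe ε * max (a - b) 0 := by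
  have := (IsLocalMin.hasDerivAt_eq_zero (Filter.Eventually.of_forall fun β => h a β)
    (hasDerivAt_innerQ_right x a b))
  rw [← mul_sum] at this
  linarith

lemma IsInnerQMin.sum_edgeFlow_eq_zero (h : IsInnerQMin e δe ε x a b) :
    ∑ w ∈ e ε, edgeFlow a b (x w) = 0 := by
  simp only [edgeFlow, sum_sub_distrib, h.sum_excess_eq, h.sum_deficit_eq, sub_self]

lemma IsInnerQMin.le (he : (e ε).Nonempty) (h : IsInnerQMin e δe ε x a b) : b ≤ a := by
  by_contra! hab
  obtain ⟨w, hw⟩ := he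
  have hΔ : max (a - b) 0 = 0 := max_eq_right (by linarith)
  have h1 := (sum_eq_zero_iff_of_nonneg fun w _ => le_max_right (x w - a) 0).1
    (h.sum_excess_eq.trans (by rw [hΔ, mul_zero])) w hw
  have h2 := (sum_eq_zero_iff_of_nonneg fun w _ => le_max_right (b - x w) 0).1
    (h.sum_deficit_eq.trans (by rw [hΔ, mul_zero])) w hw
  rw [max_eq_right_iff] at h1 h2
  linarith

end Stationarity

section EdgeFlow

variable {V : Type*} {A B : Finset V} {x : V → ℝ} {a b : ℝ}

lemma card_mul_edgeFlow_le_sum {Y : ℝ} (hY : ∀ w ∈ A, Y ≤ x w) :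
    #A * edgeFlow a b Y ≤ ∑ w ∈ A, edgeFlow a b (x w) := by
  simpa using card_nsmul_le_sum A _ _ fun w hw => edgeFlow_mono a b (hY w hw)

lemma sum_edgeFlow_le_card_mul {X : ℝ} (hX : ∀ w ∈ B, x w ≤ X) :
    ∑ w ∈ B, edgeFlow a b (x w) ≤ #B * edgeFlow a b X := by
  simpa using sum_le_card_nsmul B _ _ fun w hw => edgeFlow_mono a b (hX w hw)

lemma min_mul_sub_le_sum_edgeFlow {δ c X Y : ℝ} (hA : A.Nonempty) (hB : B.Nonempty)
    (hba : b ≤ a)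
    (hexc : ∑ w ∈ A, max (x w - a) 0 + ∑ w ∈ B, max (x w - a) 0 = δ * (a - b))
    (hdef : ∑ w ∈ A, max (b - x w) 0 + ∑ w ∈ B, max (b - x w) 0 = δ * (a - b))
    (hY : ∀ w ∈ A, Y ≤ x w) (hX : ∀ w ∈ B, x w ≤ X) (hXY : X ≤ Y)
    (hc : 0 ≤ c) (hcA : c ≤ #A) (hcB : c ≤ #B) (hcδ : c ≤ δ) :
    min 1 (c / 3) * (Y - X) ≤ ∑ w ∈ A, edgeFlow a b (x w) := by
  set F := ∑ w ∈ A, edgeFlow a b (x w)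
  have hFA : F = ∑ w ∈ A, max (x w - a) 0 - ∑ w ∈ A, max (b - x w) 0 := sum_sub_distrib _ _
  have hFB : F = ∑ w ∈ B, max (b - x w) 0 - ∑ w ∈ B, max (x w - a) 0 := by linarith
  have hA1 : (1 : ℝ) ≤ #A := by exact_mod_cast hA.card_pos
  have hB1 : (1 : ℝ) ≤ #B := by exact_mod_cast hB.card_pos
  have hle : min 1 (c / 3) * (Y - X) ≤ Y - X :=
    mul_le_of_le_one_left (by linarith) (min_le_left _ _)
  by_cases hXa : a < X
  · have hflow : edgeFlow a b Y = Y - a := by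
      rw [edgeFlow, max_eq_left (by linarith), max_eq_right (by linarith), sub_zero]
    have := card_mul_edgeFlow_le_sum (a := a) (b := b) hY
    rw [hflow] at this
    nlinarith
  by_cases hYb : Y < b
  · have hflow : edgeFlow a b X = X - b := by
      rw [edgeFlow, max_eq_right (by linarith), max_eq_left (by linarith), zero_sub, neg_sub]
    have := sum_edgeFlow_le_card_mul (a := a) (b := b) hX
    have hFB' : F = -∑ w ∈ B, edgeFlow a b (x w) := by
      simp only [hFB, edgeFlow, sum_sub_distrib, neg_sub]
    rw [hflow] at this
    nlinarith
  -- now `A` has no deficit and `B` no excess, so `F = δ (a - b)` is the full gadget flow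
  push Not at hXa hYb
  have hP : ∑ w ∈ B, max (x w - a) 0 = 0 :=
    sum_eq_zero fun w hw => max_eq_right (by linarith [hX w hw])
  have hU : ∑ w ∈ A, max (b - x w) 0 = 0 :=
    sum_eq_zero fun w hw => max_eq_right (by linarith [hY w hw])
  have h1 : #A * max (Y - a) 0 ≤ ∑ w ∈ A, max (x w - a) 0 := by
    simpa using card_nsmul_le_sum A _ _ fun w hw => max_le_max (sub_le_sub_right (hY w hw) a) le_rfl
  have h2 : #B * max (b - X) 0 ≤ ∑ w ∈ B, max (b - x w) 0 := by
    simpa using card_nsmul_le_sum B _ _ fun w hw => max_le_max (sub_le_sub_left (hX w hw) b) le_rfl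
  have h3 : Y - X ≤ max (Y - a) 0 + (a - b) + max (b - X) 0 := by
    linarith [le_max_left (Y - a) 0, le_max_left (b - X) 0]
  have h4 : c * (Y - X) ≤ 3 * F := by
    nlinarith [mul_le_mul_of_nonneg_right hcA (le_max_right (Y - a) 0),
      mul_le_mul_of_nonneg_right hcB (le_max_right (b - X) 0),
      mul_le_mul_of_nonneg_right hcδ (sub_nonneg.2 hba), mul_le_mul_of_nonneg_left h3 hc]
  calc min 1 (c / 3) * (Y - X) ≤ c / 3 * (Y - X) :=
        mul_le_mul_of_nonneg_right (min_le_right _ _) (by linarith)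
    _ ≤ F := by linarith

end EdgeFlow

section CutHyperedge

variable {V E : Type*} [Finite E] [DecidableEq V] {e : E → Finset V} {δe : E → ℝ} {x : V → ℝ}

lemma edgeMass_mul_le_sum_edgeFlow (hcard : ∀ ε, 2 ≤ (e ε).card) (hδe : ∀ ε, 1 ≤ δe ε)
    {ε : E} {a b : ℝ} (hab : IsInnerQMin e δe ε x a b) {T : Finset V}
    (hT : ∀ v ∈ T, ∀ u ∉ T, x u ≤ x v) {vIn uOut : V}
    (hvIn : ε ∈ hbdry e T → vIn ∈ e ε ∩ T ∧ ∀ w ∈ e ε ∩ T, x vIn ≤ x w)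
    (huOut : ε ∈ hbdry e T → uOut ∈ e ε \ T ∧ ∀ w ∈ e ε \ T, x w ≤ x uOut) :
    edgeMass e δe T ε * (x vIn - x uOut) ≤ ∑ w ∈ e ε ∩ T, edgeFlow a b (x w) := by
  have hδ0 : ∀ ε, 0 ≤ δe ε := fun ε => zero_le_one.trans (hδe ε)
  by_cases hε : ε ∈ hbdry e T
  · obtain ⟨hv, hvmin⟩ := hvIn hε
    obtain ⟨hu, humax⟩ := huOut hε
    have hba := hab.le (hε.1.mono inter_subset_left)
    have hΔ : max (a - b) 0 = a - b := max_eq_left (sub_nonneg.2 hba)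
    have hXY := hT vIn (mem_inter.1 hv).2 uOut (mem_sdiff.1 hu).2
    have hc := hsplit_nonneg (hδ0 ε) (e := e) T
    have hflow := min_mul_sub_le_sum_edgeFlow hε.1 hε.2 hba
      (by rw [sum_inter_add_sum_sdiff, hab.sum_excess_eq, hΔ])
      (by rw [sum_inter_add_sum_sdiff, hab.sum_deficit_eq, hΔ]) hvmin humax hXY hc
      ((min_le_left _ _).trans (min_le_left _ _)) ((min_le_left _ _).trans (min_le_right _ _))
      (min_le_right _ _)
    exact (mul_le_mul_of_nonneg_right (edgeMass_le_min hcard hδe hε) (sub_nonneg.2 hXY)).trans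
      hflow
  · rw [edgeMass_eq_zero_of_notMem hδ0 hε, zero_mul]
    simp only [hbdry, Set.mem_ofPred_eq, not_and_or, not_nonempty_iff_eq_empty] at hε
    rcases hε with h | h
    · simp [h]
    · rw [inter_eq_left.2 (sdiff_eq_empty_iff_subset.1 h), hab.sum_edgeFlow_eq_zero]

end CutHyperedge

section Minimizer

variable {V E : Type*} [Fintype V] [Fintype E] [DecidableEq V] {e : E → Finset V}
  {δe : E → ℝ} {γ : ℝ} {S : Finset V} {x : V → ℝ}

lemma mem_Icc_of_isMin_Qobj (hδe : ∀ ε, 0 ≤ δe ε) (hd : ∀ v, 0 < hdeg e δe v) (hγ : 0 < γ)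
    (hS : 0 < hvol e δe S) (hx : ∀ y, Qobj e δe γ S x ≤ Qobj e δe γ S y) (v : V) :
    x v ∈ Set.Icc 0 (hvol e δe S)⁻¹ := by
  set β := (hvol e δe S)⁻¹
  set p : V → ℝ := fun u => (if u ∈ S then 1 else 0) / hvol e δe S
  have hp : ∀ u, p u ∈ Set.Icc 0 β := fun u => by
    by_cases hu : u ∈ S <;> simp [p, β, hu, hS.le]
  by_contra hv
  -- clipping `x` to `[0, β]` does not increase any `Qe` and strictly improves the fidelity term
  set y := fun u => clip 0 β (x u)
  have hfid : ∑ u, hdeg e δe u * (y u - p u) ^ 2 < ∑ u, hdeg e δe u * (x u - p u) ^ 2 :=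
    sum_lt_sum (fun u _ => mul_le_mul_of_nonneg_left (sq_clip_sub_le (hp u)) (hd u).le)
      ⟨v, mem_univ v, mul_lt_mul_of_pos_left (sq_clip_sub_lt (hp v) hv) (hd v)⟩
  have hQe : ∑ ε, Qe e δe ε y ≤ ∑ ε, Qe e δe ε x :=
    sum_le_sum fun ε _ => Qe_clip_le (hδe ε) 0 β x
  have := hx y
  simp only [Qobj] at this
  linarith [mul_lt_mul_of_pos_left hfid hγ]

lemma stationarity_of_isMin_Qobj (hδe : ∀ ε, 0 ≤ δe ε) (hx : ∀ y, Qobj e δe γ S x ≤ Qobj e δe γ S y)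
    {a b : E → ℝ} (hab : ∀ ε, IsInnerQMin e δe ε x (a ε) (b ε)) (v : V) :
    γ * (hdeg e δe v * (x v - (if v ∈ S then 1 else 0) / hvol e δe S))
      + ∑ ε with v ∈ e ε, edgeFlow (a ε) (b ε) (x v) = 0 := by
  set p : V → ℝ := fun u => (if u ∈ S then 1 else 0) / hvol e δe S
  -- `x` also minimises the objective with each inner minimum frozen at `(a ε, b ε)`
  set G : (V → ℝ) → ℝ := fun z =>
    γ * ∑ u, hdeg e δe u * (z u - p u) ^ 2 + ∑ ε, innerQ e δe ε z (a ε) (b ε)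
  have hG : ∀ z, G x ≤ G z := fun z =>
    calc G x = Qobj e δe γ S x := by simp only [G, Qobj, p, fun ε => (hab ε).Qe_eq (hδe ε)]
      _ ≤ Qobj e δe γ S z := hx z
      _ ≤ G z := add_le_add le_rfl (sum_le_sum fun ε _ => Qe_le_innerQ (hδe ε) z _ _)
  have hmin : IsLocalMin (fun s => G (Function.update x v s)) (x v) :=
    Filter.Eventually.of_forall fun s => by simpa using hG (Function.update x v s)
  have hderiv : HasDerivAt (fun s => G (Function.update x v s))
      (γ * ∑ u, (if u = v then hdeg e δe u * (2 * (x v - p u)) else 0)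
        + ∑ ε, (if v ∈ e ε then 2 * edgeFlow (a ε) (b ε) (x v) else 0)) (x v) := by
    refine ((HasDerivAt.fun_sum fun u _ => hasDerivAt_comp_update_apply
      (f := fun t => hdeg e δe u * (t - p u) ^ 2) ?_ u).const_mul γ).add
      (HasDerivAt.fun_sum fun ε _ => hasDerivAt_innerQ_update x v _ _)
    simpa using (((hasDerivAt_id (x v)).sub_const (p u)).fun_pow 2).const_mul (hdeg e δe u)
  have := hmin.hasDerivAt_eq_zero hderiv
  rw [sum_ite_eq', if_pos (mem_univ v), ← sum_filter, ← mul_sum] at this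
  linarith

lemma mul_sum_sub_eq_neg_sum_edgeFlow (hδe : ∀ ε, 0 ≤ δe ε)
    (hx : ∀ y, Qobj e δe γ S x ≤ Qobj e δe γ S y) {a b : E → ℝ}
    (hab : ∀ ε, IsInnerQMin e δe ε x (a ε) (b ε)) (T : Finset V) :
    γ * ∑ v ∈ T, hdeg e δe v * (x v - (if v ∈ S then 1 else 0) / hvol e δe S)
      = -∑ ε, ∑ w ∈ e ε ∩ T, edgeFlow (a ε) (b ε) (x w) := by
  rw [mul_sum, sum_congr rfl fun v _ => eq_neg_of_add_eq_zero_left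
    (stationarity_of_isMin_Qobj hδe hx hab v), sum_neg_distrib,
    sum_comm' (t' := univ) (s' := fun ε => e ε ∩ T) fun v ε => by simp [and_comm]]

lemma sum_hdeg_mul_eq_one (hδe : ∀ ε, 0 ≤ δe ε) (hγ : γ ≠ 0) (hS : hvol e δe S ≠ 0)
    (hx : ∀ y, Qobj e δe γ S x ≤ Qobj e δe γ S y) : ∑ v, hdeg e δe v * x v = 1 := by
  choose a b hab using fun ε => exists_isInnerQMin (e := e) (hδe ε) x
  have := mul_sum_sub_eq_neg_sum_edgeFlow hδe hx hab univ
  simp only [inter_univ, (hab _).sum_edgeFlow_eq_zero, sum_const_zero, neg_zero, mul_sub,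
    sum_sub_distrib, sub_eq_zero] at this
  rw [mul_left_cancel₀ hγ this]
  simp only [← mul_div_assoc, mul_ite, mul_one, mul_zero, ← sum_div, sum_ite_mem, univ_inter]
  exact div_self hS

lemma exists_mul_sum_sub_le_sum_edgeMass (hcard : ∀ ε, 2 ≤ (e ε).card)
    (hδe : ∀ ε, 1 ≤ δe ε) (hx : ∀ y, Qobj e δe γ S x ≤ Qobj e δe γ S y) {T : Finset V}
    (hT : ∀ v ∈ T, ∀ u ∉ T, x u ≤ x v) :
    ∃ vIn uOut : E → V, (∀ ε ∈ hbdry e T, vIn ε ∈ e ε ∩ T ∧ uOut ε ∈ e ε \ T) ∧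
      γ * ∑ v ∈ T, hdeg e δe v * (x v - (if v ∈ S then 1 else 0) / hvol e δe S)
        ≤ ∑ ε, edgeMass e δe T ε * (x (uOut ε) - x (vIn ε)) := by
  have hδ0 : ∀ ε, 0 ≤ δe ε := fun ε => zero_le_one.trans (hδe ε)
  have hne : ∀ ε, (e ε).Nonempty := fun ε => card_pos.1 (by linarith [hcard ε])
  choose a b hab using fun ε => exists_isInnerQMin (e := e) (hδ0 ε) x
  -- on each cut hyperedge, the lowest vertex inside `T` and the highest one outside
  have hvIn : ∀ ε, ∃ v, ε ∈ hbdry e T → v ∈ e ε ∩ T ∧ ∀ w ∈ e ε ∩ T, x v ≤ x w := by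
    intro ε
    by_cases h : ε ∈ hbdry e T
    · exact (exists_min_image _ x h.1).imp fun _ hv _ => hv
    · exact (hne ε).imp fun _ _ h' => absurd h' h
  have huOut : ∀ ε, ∃ u, ε ∈ hbdry e T → u ∈ e ε \ T ∧ ∀ w ∈ e ε \ T, x w ≤ x u := by
    intro ε
    by_cases h : ε ∈ hbdry e T
    · exact (exists_max_image _ x h.2).imp fun _ hu _ => hu
    · exact (hne ε).imp fun _ _ h' => absurd h' h
  choose vIn hvIn using hvIn
  choose uOut huOut using huOut
  refine ⟨vIn, uOut, fun ε hε => ⟨(hvIn ε hε).1, (huOut ε hε).1⟩, ?_⟩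
  rw [mul_sum_sub_eq_neg_sum_edgeFlow hδ0 hx hab, neg_le, ← sum_neg_distrib]
  refine sum_le_sum fun ε _ => ?_
  rw [← mul_neg, neg_sub]
  exact edgeMass_mul_le_sum_edgeFlow hcard hδe (hab ε) hT (hvIn ε) (huOut ε)

theorem LScurve_sweepSet_le (hcard : ∀ ε, 2 ≤ (e ε).card) (hδe : ∀ ε, 1 ≤ δe ε) (hγ : 0 < γ)
    (hx : ∀ y, Qobj e δe γ S x ≤ Qobj e δe γ S y) {x₀ : V → ℝ}
    (hx₀ : ∀ v, x₀ v = (if v ∈ S then 1 else 0) / hvol e δe S) {n : ℕ} (σ σ₀ : Fin n ≃ V)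
    (hσ : ∀ i j, i ≤ j → x (σ j) ≤ x (σ i)) (hσ₀ : ∀ i j, i ≤ j → x₀ (σ₀ j) ≤ x₀ (σ₀ i))
    (j : ℕ) :
    LScurve σ (hdeg e δe) x (hvol e δe (sweepSet σ j)) ≤
      (γ / (2 + γ)) * LScurve σ₀ (hdeg e δe) x₀ (hvol e δe (sweepSet σ j)) +
        (1 / (2 + γ)) *
          (LScurve σ (hdeg e δe) x (hvol e δe (sweepSet σ j) -
              (1 + 2 * deltaBar e δe (sweepSet σ j))⁻¹ * hcut e δe (sweepSet σ j)) +
            LScurve σ (hdeg e δe) x (hvol e δe (sweepSet σ j) +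
              (1 + 2 * deltaBar e δe (sweepSet σ j))⁻¹ * hcut e δe (sweepSet σ j))) := by
  have hδ0 : ∀ ε, 0 ≤ δe ε := fun ε => zero_le_one.trans (hδe ε)
  have hd : ∀ v, 0 ≤ hdeg e δe v := hdeg_nonneg hδ0
  have hbreak : LScurve σ (hdeg e δe) x (hvol e δe (sweepSet σ j))
      = ∑ v ∈ sweepSet σ j, hdeg e δe v * x v := by
    rw [hvol, sum_sweepSet, LScurve_cumVol σ hd]
  have hT : ∀ v ∈ sweepSet σ j, ∀ u ∉ sweepSet σ j, x u ≤ x v :=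
    fun v hv u hu => le_of_mem_sweepSet σ hσ hv hu
  generalize sweepSet σ j = T at hbreak hT ⊢
  obtain ⟨vIn, uOut, hmem, hcore⟩ := exists_mul_sum_sub_le_sum_edgeMass hcard hδe hx hT
  have hm := edgeMass_mem_Icc hcard hδe T
  have hbd : ∀ ε, edgeMass e δe T ε ≠ 0 → ε ∈ hbdry e T := fun ε h =>
    by_contra fun h' => h (edgeMass_eq_zero_of_notMem hδ0 h')
  have hsub := sum_sub_sum_le_LScurve σ hd hσ (fun ε => (hm ε).1)
    (fun ε h => (mem_inter.1 (hmem ε (hbd ε h)).1).2)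
    (sum_fiber_le_hdeg hcard hδe hm fun ε h => (mem_inter.1 (hmem ε (hbd ε h)).1).1)
  have hadd := sum_add_sum_le_LScurve σ hd hσ (fun ε => (hm ε).1)
    (fun ε h => (mem_sdiff.1 (hmem ε (hbd ε h)).2).2)
    (sum_fiber_le_hdeg hcard hδe hm fun ε h => (mem_sdiff.1 (hmem ε (hbd ε h)).2).1)
  have hseed := mul_le_mul_of_nonneg_left
    (by simpa using mul_sum_le_LScurve σ₀ hd hσ₀ ⟨zero_le_one, le_rfl⟩ T) hγ.le
  rw [sum_edgeMass, ← hvol] at hsub hadd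
  rw [← hvol] at hseed
  simp only [← hx₀, mul_sub, sum_sub_distrib] at hcore
  rw [hbreak, show ∀ A B C : ℝ, γ / (2 + γ) * A + 1 / (2 + γ) * (B + C)
    = (γ * A + (B + C)) / (2 + γ) from fun A B C => by ring, le_div_iff₀ (by linarith)]
  linarith

end Minimizer

open Finset in
/-- Mixing step (Lemma `lm:diffusion2`): for the minimizer `x = x(γ,S)` of the
diffusion objective and `x₀ = 1_S / vol(S)`, every sweep set `S_j` of `x` with
`0 < vol S_j < M` satisfies, with `σ_j = (1 + 2 δ̄(S_j))⁻¹` (so `σ_j = 1` when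
`∂S_j = ∅`),
`I_x(vol S_j) ≤ (γ/(2+γ)) I_{x₀}(vol S_j) + (1/(2+γ)) (I_x(vol S_j − σ_j cut S_j) + I_x(vol S_j + σ_j cut S_j))`;
moreover `I_x(k) ≤ I_{x₀}(k)` for all `k ∈ [0,M]`. -/
theorem ls_mixing_step {V E : Type*} [Fintype V] [Fintype E] [DecidableEq V]
    (e : E → Finset V) (δe : E → ℝ)
    (hcard : ∀ ε, 2 ≤ (e ε).card) (hδe : ∀ ε, 1 ≤ δe ε)
    (hcov : ∀ v : V, ∃ ε, v ∈ e ε)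
    (γ : ℝ) (hγ : 0 < γ)
    (S : Finset V) (hS0 : 0 < hvol e δe S)
    (x : V → ℝ) (hx : ∀ y : V → ℝ, Qobj e δe γ S x ≤ Qobj e δe γ S y)
    (x₀ : V → ℝ) (hx₀ : ∀ v, x₀ v = (if v ∈ S then 1 else 0) / hvol e δe S)
    (σ : Fin (Fintype.card V) ≃ V)
    (hσ : ∀ i j : Fin (Fintype.card V), i ≤ j → x (σ j) ≤ x (σ i))
    (σ₀ : Fin (Fintype.card V) ≃ V)
    (hσ₀ : ∀ i j : Fin (Fintype.card V), i ≤ j → x₀ (σ₀ j) ≤ x₀ (σ₀ i)) :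
    (∀ j : ℕ, j ≤ Fintype.card V → 0 < hvol e δe (sweepSet σ j) →
      hvol e δe (sweepSet σ j) < hM e δe →
      LScurve σ (hdeg e δe) x (hvol e δe (sweepSet σ j)) ≤
        (γ / (2 + γ)) * LScurve σ₀ (hdeg e δe) x₀ (hvol e δe (sweepSet σ j)) +
          (1 / (2 + γ)) *
            (LScurve σ (hdeg e δe) x
                (hvol e δe (sweepSet σ j) -
                  (1 + 2 * deltaBar e δe (sweepSet σ j))⁻¹ *
                    hcut e δe (sweepSet σ j)) +
              LScurve σ (hdeg e δe) x
                (hvol e δe (sweepSet σ j) +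
                  (1 + 2 * deltaBar e δe (sweepSet σ j))⁻¹ *
                    hcut e δe (sweepSet σ j)))) ∧
      ∀ k ∈ Set.Icc (0 : ℝ) (hM e δe),
        LScurve σ (hdeg e δe) x k ≤ LScurve σ₀ (hdeg e δe) x₀ k := by
  refine ⟨fun j _ _ _ => LScurve_sweepSet_le hcard hδe hγ hx hx₀ σ σ₀ hσ hσ₀ j,
    fun k hk => ?_⟩
  have hδ0 : ∀ ε, 0 ≤ δe ε := fun ε => zero_le_one.trans (hδe ε)
  have hd : ∀ v, 0 < hdeg e δe v := fun v => zero_lt_one.trans_le (one_le_hdeg hcard hδe hcov v)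
  have hmass : ∑ v, hdeg e δe v * x v = (hvol e δe S)⁻¹ * hvol e δe S := by
    rw [inv_mul_cancel₀ hS0.ne', sum_hdeg_mul_eq_one hδ0 hγ.ne' hS0.ne' hx]
  refine LScurve_le_LScurve_of_sum_eq σ σ₀ (fun v => (hd v).le) hS0
    (mem_Icc_of_isMin_Qobj hδ0 hd hγ hS0 hx) hmass (fun v => ?_) hσ₀ hk.1
  rw [hx₀, ite_div, one_div, zero_div]
end

section
/- Let m, k, k₊, k₋ be integers with m ≥ 2, 1 ≤ k ≤ k₊, k₋ ≥ 1 and k₊ + k₋ ≤ m, and let δ > 0 be real. Then k · ( (k₊ − k)(k₋ + δ) + k₋ δ ) / ( k₊ k₋ + δ(k₊ + k₋) ) ≥ min{k, m − k, δ} / ( min{δ, m/2} + 2 ). -/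
/-!
Writing `N = (k₊ - k)(k₋ + δ) + k₋ δ`, the denominator is `k (k₋ + δ) + N`, so the right-hand side is
`(1/k + (k₋ + δ)/N)⁻¹`; since `N ≥ k₋ δ` it is at least the harmonic-type mean `(1/k + 1/k₋ + 1/δ)⁻¹`.
With `s = min{k, m - k, δ}` we have `s/k ≤ 1`, `s/δ ≤ 1` and `s/k₋ ≤ s ≤ min{δ, m/2}`, so
`s (1/k + 1/k₋ + 1/δ) ≤ min{δ, m/2} + 2`.
-/

lemma inv_add_inv_add_inv_inv_le_mul_div {x y z N : ℝ} (hx : 0 < x) (hy : 0 < y) (hz : 0 < z)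
    (hN : y * z ≤ N) :
    (x⁻¹ + y⁻¹ + z⁻¹)⁻¹ ≤ x * N / (x * (y + z) + N) := by
  have hN0 : 0 < N := (mul_pos hy hz).trans_le hN
  rw [le_div_iff₀ (by positivity)]
  field_simp
  nlinarith [mul_pos (mul_pos hx hx) (add_pos hy hz)]

lemma div_add_two_le_inv_add_inv_add_inv_inv {s t a b c : ℝ} (ha : 0 < a) (hb : 1 ≤ b)
    (hc : 0 < c) (ht : 0 ≤ t) (hsa : s ≤ a) (hsc : s ≤ c) (hst : s ≤ t) :
    s / (t + 2) ≤ (a⁻¹ + b⁻¹ + c⁻¹)⁻¹ := by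
  have hsa' : s / a ≤ 1 := (div_le_one ha).2 hsa
  have hsc' : s / c ≤ 1 := (div_le_one hc).2 hsc
  have hsb' : s / b ≤ t := (div_le_iff₀ (by linarith)).2 (by nlinarith)
  have hmul : s * (a⁻¹ + b⁻¹ + c⁻¹) ≤ t + 2 := by
    simp only [mul_add, ← div_eq_mul_inv]
    linarith
  rw [div_le_iff₀ (by linarith), le_inv_mul_iff₀ (by positivity)]
  linarith

theorem ls_algebra_case_one_general (m k kp km : ℕ) (δ : ℝ)
    (hk1 : 1 ≤ k) (hkkp : k ≤ kp) (hkm : 1 ≤ km) (hδ : 0 < δ) :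
    min (min (k : ℝ) ((m : ℝ) - k)) δ / (min δ ((m : ℝ) / 2) + 2) ≤
      (k : ℝ) * (((kp : ℝ) - k) * ((km : ℝ) + δ) + (km : ℝ) * δ) /
        ((kp : ℝ) * km + δ * ((kp : ℝ) + km)) := by
  have hk : (1 : ℝ) ≤ k := by exact_mod_cast hk1
  have hkp : (k : ℝ) ≤ kp := by exact_mod_cast hkkp
  have hkm' : (1 : ℝ) ≤ km := by exact_mod_cast hkm
  set s := min (min (k : ℝ) ((m : ℝ) - k)) δ
  have hs_le_k : s ≤ k := (min_le_left _ _).trans (min_le_left _ _)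
  have hs_le_mk : s ≤ m - k := (min_le_left _ _).trans (min_le_right _ _)
  have hs_le_t : s ≤ min δ ((m : ℝ) / 2) := le_min (min_le_right _ _) (by linarith)
  have hN : (km : ℝ) * δ ≤ ((kp : ℝ) - k) * ((km : ℝ) + δ) + (km : ℝ) * δ :=
    le_add_of_nonneg_left (mul_nonneg (sub_nonneg.2 hkp) (by positivity))
  have hden : (kp : ℝ) * km + δ * ((kp : ℝ) + km) =
      k * (km + δ) + (((kp : ℝ) - k) * ((km : ℝ) + δ) + (km : ℝ) * δ) := by ring
  rw [hden]
  calc s / (min δ ((m : ℝ) / 2) + 2) ≤ ((k : ℝ)⁻¹ + (km : ℝ)⁻¹ + δ⁻¹)⁻¹ :=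
        div_add_two_le_inv_add_inv_add_inv_inv (by linarith) hkm' hδ (by positivity)
          hs_le_k (min_le_right _ _) hs_le_t
    _ ≤ _ := inv_add_inv_add_inv_inv_le_mul_div (by linarith) (by linarith) hδ hN

/-- First case (`k ≤ k₊`) of the key algebraic inequality in the Lovász–Simonovits
diffusion lemma for hypergraphs with δ-linear splitting functions. -/
theorem ls_algebra_case_one (m k kp km : ℕ) (δ : ℝ)
    (hm : 2 ≤ m) (hk1 : 1 ≤ k) (hkkp : k ≤ kp) (hkm : 1 ≤ km)
    (hsum : kp + km ≤ m) (hδ : 0 < δ) :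
    min (min (k : ℝ) ((m : ℝ) - k)) δ / (min δ ((m : ℝ) / 2) + 2) ≤
      (k : ℝ) * (((kp : ℝ) - k) * ((km : ℝ) + δ) + (km : ℝ) * δ) /
        ((kp : ℝ) * km + δ * ((kp : ℝ) + km)) :=
  ls_algebra_case_one_general m k kp km δ hk1 hkkp hkm hδ
end

section
/- Let m, k, k₊, k₋ be integers with m ≥ 2, k₊ ≥ 1, k₋ ≥ 1 and k₊ ≤ k ≤ m − k₋, and let δ > 0 be real. Then k₊ k₋ δ / ( k₊ k₋ + δ(k₊ + k₋) ) ≥ min{k, m − k, δ} / ( 2 min{δ, m/2} + 1 ). -/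
/-!
The right-hand side is `(1/k₊ + 1/k₋ + 1/δ)⁻¹`, so for `N = min {k, m - k, δ} > 0` the claim reads
`N/k₊ + N/k₋ + N/δ ≤ 2 min {δ, m/2} + 1`. Here `N/δ ≤ 1`, and since `k₊, k₋ ≥ 1`,
`N/k₊ + N/k₋` is at most both `2N ≤ 2δ` and `(m - k) + k = m`.
-/

lemma add_inv_add_inv_eq {a b δ : ℝ} (ha : a ≠ 0) (hb : b ≠ 0) (hδ : δ ≠ 0) :
    a * b * δ / (a * b + δ * (a + b)) = (a⁻¹ + b⁻¹ + δ⁻¹)⁻¹ := by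
  field_simp
  ring

lemma mul_inv_add_inv_le_two_mul_min {N x y δ a b : ℝ} (hN : 0 ≤ N) (hx : N ≤ x) (hy : N ≤ y)
    (hNδ : N ≤ δ) (ha : 1 ≤ a) (hb : 1 ≤ b) :
    N * (a⁻¹ + b⁻¹) ≤ 2 * min δ ((x + y) / 2) := by
  have hNa : N * a⁻¹ ≤ N := mul_le_of_le_one_right hN (inv_le_one_of_one_le₀ ha)
  have hNb : N * b⁻¹ ≤ N := mul_le_of_le_one_right hN (inv_le_one_of_one_le₀ hb)
  rw [mul_min_of_nonneg _ _ zero_le_two]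
  exact le_min (by linarith) (by linarith)

theorem ls_algebra_case_two_general (m k kp km : ℕ) (δ : ℝ)
    (hkp : 1 ≤ kp) (hkm : 1 ≤ km) (hδ : 0 < δ) :
    min (min (k : ℝ) ((m : ℝ) - k)) δ / (2 * min δ ((m : ℝ) / 2) + 1) ≤
      (kp : ℝ) * (km : ℝ) * δ / ((kp : ℝ) * km + δ * ((kp : ℝ) + km)) := by
  have ha : (1 : ℝ) ≤ kp := by exact_mod_cast hkp
  have hb : (1 : ℝ) ≤ km := by exact_mod_cast hkm
  rw [add_inv_add_inv_eq (by positivity) (by positivity) hδ.ne']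
  set N := min (min (k : ℝ) ((m : ℝ) - k)) δ
  have hD : 0 < 2 * min δ ((m : ℝ) / 2) + 1 := by positivity
  rcases le_or_gt N 0 with hN | hN
  · exact (div_nonpos_of_nonpos_of_nonneg hN hD.le).trans (by positivity)
  have hNδ : N ≤ δ := min_le_right _ _
  have hsplit := mul_inv_add_inv_le_two_mul_min hN.le
    ((min_le_left _ _).trans (min_le_left _ _)) ((min_le_left _ _).trans (min_le_right _ _))
    hNδ ha hb
  rw [add_sub_cancel] at hsplit
  have hNδ_inv : N * δ⁻¹ ≤ 1 := by rwa [← div_eq_mul_inv, div_le_one hδ]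
  rw [div_le_iff₀ hD, le_inv_mul_iff₀ (by positivity)]
  linarith [mul_add N ((kp : ℝ)⁻¹ + (km : ℝ)⁻¹) δ⁻¹]

/-- Second (middle) case (`k₊ ≤ k ≤ m − k₋`) of the key algebraic inequality in the
Lovász–Simonovits diffusion lemma for hypergraphs with δ-linear splitting functions. -/
theorem ls_algebra_case_two (m k kp km : ℕ) (δ : ℝ)
    (hm : 2 ≤ m) (hkp : 1 ≤ kp) (hkm : 1 ≤ km)
    (hlo : kp ≤ k) (hhi : k ≤ m - km) (hδ : 0 < δ) :
    min (min (k : ℝ) ((m : ℝ) - k)) δ / (2 * min δ ((m : ℝ) / 2) + 1) ≤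
      (kp : ℝ) * (km : ℝ) * δ / ((kp : ℝ) * km + δ * ((kp : ℝ) + km)) :=
  ls_algebra_case_two_general m k kp km δ hkp hkm hδ
end

section
/- Let x₁ ≥ x₂ ≥ … ≥ x_m be real numbers, δ > 0, and let (a*, b*) be a minimizer over (a,b) ∈ ℝ² of g(a,b) = Σ_{i=1}^m ( ((x_i − a)₊)² + ((b − x_i)₊)² ) + δ ((a − b)₊)², where (t)₊ = max{t,0}. Suppose a* > b*, and set k₊ = #{ i : x_i > a* } and k₋ = #{ i : x_i < b* }. Then k₊ ≥ 1, k₋ ≥ 1, and writing D = k₊ k₋ + δ(k₊ + k₋), T = Σ_{i=1}^{k₊} x_i and B = Σ_{i=m−k₋+1}^{m} x_i, the minimizer is given explicitly by a* = ( (k₋ + δ) T + δ B ) / D and b* = ( δ T + (k₊ + δ) B ) / D. -/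
/-!
Since `(u + h)₊² ≤ u₊² + 2 u₊ h + h²`, moving `a` (or `b`) by `s` from a minimizer with `a > b`
changes the objective by at most a linear term in `s` plus `O(s²)`; so the linear terms vanish:
`Σ (xᵢ - a)₊ = δ (a - b) = Σ (b - xᵢ)₊`. Since `x` is sorted, the indices with `xᵢ > a` are the
first `k₊` and those with `xᵢ < b` the last `k₋`, so these two equations read
`T - k₊ a = δ (a - b)` and `k₋ b - B = δ (a - b)`, a linear system with determinant `D > 0`.
-/

open Finset

/-- The inner objective `g(a, b)` of the gadget. -/
noncomputable def gadgetObjective {ι : Type*} [Fintype ι] (x : ι → ℝ) (δ a b : ℝ) : ℝ :=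
  ∑ i, ((max (x i - a) 0) ^ 2 + (max (b - x i) 0) ^ 2) + δ * (max (a - b) 0) ^ 2

lemma sq_max_add_le (u h : ℝ) :
    max (u + h) 0 ^ 2 ≤ max u 0 ^ 2 + 2 * max u 0 * h + h ^ 2 := by
  rcases le_total (u + h) 0 with huh | huh
  · rw [max_eq_right huh]
    nlinarith [sq_nonneg (max u 0 + h)]
  · rw [max_eq_left huh]
    rcases le_total u 0 with hu | hu
    · rw [max_eq_right hu]
      nlinarith [mul_nonpos_of_nonpos_of_nonneg hu (by linarith : (0 : ℝ) ≤ u + 2 * h)]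
    · rw [max_eq_left hu]
      nlinarith

lemma eq_zero_of_forall_mul_add_mul_sq_nonneg {A C : ℝ} (h : ∀ s : ℝ, 0 ≤ A * s + C * s ^ 2) :
    A = 0 := by
  by_contra hA
  set c := |C| + 1
  have hc : 0 < c := by positivity
  have hs := h (-A / (2 * c))
  have hval :
      A * (-A / (2 * c)) + C * (-A / (2 * c)) ^ 2 = A ^ 2 / (4 * c ^ 2) * (C - 2 * c) := by
    field_simp; ring
  rw [hval] at hs
  have hneg : C - 2 * c < 0 := by linarith [le_abs_self C, abs_nonneg C]
  linarith [mul_neg_of_pos_of_neg (by positivity : 0 < A ^ 2 / (4 * c ^ 2)) hneg]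

namespace gadgetObjective

variable {ι : Type*} [Fintype ι] {x : ι → ℝ} {δ a b : ℝ}

lemma neg_swap (x : ι → ℝ) (δ a b : ℝ) :
    gadgetObjective (-x) δ (-b) (-a) = gadgetObjective x δ a b := by
  simp only [gadgetObjective, Pi.neg_apply, neg_sub_neg, add_comm (max (x _ - a) 0 ^ 2)]

lemma add_left_le (hδ : 0 ≤ δ) (hab : b ≤ a) (s : ℝ) :
    gadgetObjective x δ (a + s) b ≤ gadgetObjective x δ a b
      + (2 * δ * (a - b) - 2 * ∑ i, max (x i - a) 0) * s + (Fintype.card ι + δ) * s ^ 2 := by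
  have hsum : ∑ i, max (x i - (a + s)) 0 ^ 2
      ≤ ∑ i, (max (x i - a) 0 ^ 2 + 2 * max (x i - a) 0 * (-s) + s ^ 2) :=
    sum_le_sum fun i _ => by
      simpa only [sub_add_eq_sub_sub, sub_eq_add_neg (x i - a), neg_sq] using
        sq_max_add_le (x i - a) (-s)
  have hgap : max (a + s - b) 0 ^ 2 ≤ (a - b) ^ 2 + 2 * (a - b) * s + s ^ 2 := by
    simpa only [add_sub_right_comm, max_eq_left (sub_nonneg.2 hab)] using
      sq_max_add_le (a - b) s
  simp only [gadgetObjective, sum_add_distrib, ← sum_mul, sum_const, card_univ, nsmul_eq_mul,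
    ← mul_sum, max_eq_left (sub_nonneg.2 hab)] at hsum ⊢
  nlinarith [mul_le_mul_of_nonneg_left hgap hδ]

lemma sum_max_sub_eq_of_isMin (hδ : 0 ≤ δ) (hab : b ≤ a)
    (hmin : ∀ a' b', gadgetObjective x δ a b ≤ gadgetObjective x δ a' b') :
    ∑ i, max (x i - a) 0 = δ * (a - b) := by
  have hA := eq_zero_of_forall_mul_add_mul_sq_nonneg
    (A := 2 * δ * (a - b) - 2 * ∑ i, max (x i - a) 0) (C := Fintype.card ι + δ) fun s => by
      linarith [hmin (a + s) b, add_left_le (x := x) hδ hab s]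
  linarith

lemma sum_max_sub_eq_of_isMin' (hδ : 0 ≤ δ) (hab : b ≤ a)
    (hmin : ∀ a' b', gadgetObjective x δ a b ≤ gadgetObjective x δ a' b') :
    ∑ i, max (b - x i) 0 = δ * (a - b) := by
  have hmin' : ∀ a' b', gadgetObjective (-x) δ (-b) (-a) ≤ gadgetObjective (-x) δ a' b' :=
    fun a' b' => calc
      _ = gadgetObjective x δ a b := neg_swap x δ a b
      _ ≤ gadgetObjective x δ (-b') (-a') := hmin _ _
      _ = _ := by rw [← neg_swap, neg_neg, neg_neg]
  have := sum_max_sub_eq_of_isMin hδ (neg_le_neg hab) hmin'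
  simpa only [Pi.neg_apply, neg_sub_neg, sub_neg_eq_add, neg_add_eq_sub] using this

end gadgetObjective

section Fintype

variable {ι : Type*} [Fintype ι]

lemma sum_max_sub_zero_eq_sum_filter (x : ι → ℝ) (a : ℝ) :
    ∑ i, max (x i - a) 0 = ∑ i ∈ univ.filter (a < x ·), (x i - a) := by
  rw [sum_filter]
  refine sum_congr rfl fun i _ => ?_
  split_ifs with h
  · exact max_eq_left (sub_nonneg.2 h.le)
  · exact max_eq_right (sub_nonpos.2 (not_lt.1 h))

lemma sum_max_sub_zero_eq_sum_filter' (x : ι → ℝ) (b : ℝ) :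
    ∑ i, max (b - x i) 0 = ∑ i ∈ univ.filter (x · < b), (b - x i) := by
  rw [sum_filter]
  refine sum_congr rfl fun i _ => ?_
  split_ifs with h
  · exact max_eq_left (sub_nonneg.2 h.le)
  · exact max_eq_right (sub_nonpos.2 (not_lt.1 h))

end Fintype

namespace Fin

variable {m : ℕ} {s : Finset (Fin m)}

lemma filter_val_lt_card_eq_of_isLowerSet (hs : IsLowerSet (s : Set (Fin m))) :
    univ.filter (fun i : Fin m => (i : ℕ) < #s) = s := by
  ext i
  simp only [mem_filter, mem_univ, true_and]
  constructor
  · intro hi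
    by_contra his
    have hsub : s ⊆ Iio i := fun j hj => mem_Iio.2 <| lt_of_not_ge fun hij => his (hs hij hj)
    have := card_le_card hsub
    rw [card_Iio] at this
    omega
  · intro hi
    have hsub : Iic i ⊆ s := fun j hj => hs (mem_Iic.1 hj) hi
    have := card_le_card hsub
    rw [card_Iic] at this
    omega

lemma filter_sub_card_le_val_eq_of_isUpperSet (hs : IsUpperSet (s : Set (Fin m))) :
    univ.filter (fun i : Fin m => m - #s ≤ (i : ℕ)) = s := by
  have hc : IsLowerSet ((sᶜ : Finset (Fin m)) : Set (Fin m)) := by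
    rw [coe_compl]; exact hs.compl
  have hcard : #sᶜ = m - #s := by rw [card_compl, Fintype.card_fin]
  conv_rhs =>
    rw [← compl_compl s, ← filter_val_lt_card_eq_of_isLowerSet hc, compl_filter, hcard]
  simp only [not_lt]

end Fin

lemma eq_of_gadget_stationary {p q δ T B a b : ℝ} (hp : T - p * a = δ * (a - b))
    (hq : q * b - B = δ * (a - b)) (hD : p * q + δ * (p + q) ≠ 0) :
    a = ((q + δ) * T + δ * B) / (p * q + δ * (p + q)) ∧
      b = (δ * T + (p + δ) * B) / (p * q + δ * (p + q)) := by
  constructor <;> rw [eq_div_iff hD]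
  · linear_combination (-q - δ) * hp + δ * hq
  · linear_combination (-δ) * hp + (p + δ) * hq

/-- Closed form for the optimal auxiliary values of the inner gadget minimization
`min_{a,b} Σᵢ ((xᵢ−a)₊² + (b−xᵢ)₊²) + δ (a−b)₊²` for sorted `x₁ ≥ … ≥ x_m`,
in the case `a* > b*`: with `k₊ = #{i : xᵢ > a*}`, `k₋ = #{i : xᵢ < b*}`,
`D = k₊k₋ + δ(k₊+k₋)`, `T = Σ_{i≤k₊} xᵢ` and `B = Σ_{i>m−k₋} xᵢ`, we have `k₊,k₋ ≥ 1`,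
`a* = ((k₋+δ)T + δB)/D` and `b* = (δT + (k₊+δ)B)/D`. -/
theorem gadget_minimizer_formula (m : ℕ) (x : Fin m → ℝ) (δ : ℝ) (hδ : 0 < δ)
    (hsort : ∀ i j : Fin m, i ≤ j → x j ≤ x i)
    (a b : ℝ)
    (hmin : ∀ a' b' : ℝ,
      (∑ i, ((max (x i - a) 0) ^ 2 + (max (b - x i) 0) ^ 2) + δ * (max (a - b) 0) ^ 2) ≤
        (∑ i, ((max (x i - a') 0) ^ 2 + (max (b' - x i) 0) ^ 2) +
          δ * (max (a' - b') 0) ^ 2))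
    (hab : b < a)
    (kp km : ℕ)
    (hkp : kp = (univ.filter fun i : Fin m => a < x i).card)
    (hkm : km = (univ.filter fun i : Fin m => x i < b).card)
    (T B D : ℝ)
    (hT : T = ∑ i ∈ univ.filter (fun i : Fin m => (i : ℕ) < kp), x i)
    (hB : B = ∑ i ∈ univ.filter (fun i : Fin m => m - km ≤ (i : ℕ)), x i)
    (hD : D = (kp : ℝ) * km + δ * ((kp : ℝ) + km)) :
    1 ≤ kp ∧ 1 ≤ km ∧
      a = (((km : ℝ) + δ) * T + δ * B) / D ∧
      b = (δ * T + ((kp : ℝ) + δ) * B) / D := by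
  have hgap : 0 < δ * (a - b) := mul_pos hδ (sub_pos.2 hab)
  have hTop : ∑ i ∈ univ.filter (a < x ·), (x i - a) = δ * (a - b) := by
    rw [← sum_max_sub_zero_eq_sum_filter,
      gadgetObjective.sum_max_sub_eq_of_isMin hδ.le hab.le hmin]
  have hBot : ∑ i ∈ univ.filter (x · < b), (b - x i) = δ * (a - b) := by
    rw [← sum_max_sub_zero_eq_sum_filter',
      gadgetObjective.sum_max_sub_eq_of_isMin' hδ.le hab.le hmin]
  have hTop_eq : univ.filter (fun i : Fin m => (i : ℕ) < kp) = univ.filter (a < x ·) := by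
    rw [hkp]
    exact Fin.filter_val_lt_card_eq_of_isLowerSet fun i j hji hj => by
      simp only [coe_filter, mem_univ, true_and, Set.mem_ofPred_eq] at hj ⊢
      exact hj.trans_le (hsort _ _ hji)
  have hBot_eq : univ.filter (fun i : Fin m => m - km ≤ (i : ℕ)) = univ.filter (x · < b) := by
    rw [hkm]
    exact Fin.filter_sub_card_le_val_eq_of_isUpperSet fun i j hij hi => by
      simp only [coe_filter, mem_univ, true_and, Set.mem_ofPred_eq] at hi ⊢
      exact (hsort _ _ hij).trans_lt hi
  have hkp1 : 1 ≤ kp := hkp ▸ card_pos.2 (nonempty_of_sum_ne_zero (hTop ▸ hgap.ne'))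
  have hkm1 : 1 ≤ km := hkm ▸ card_pos.2 (nonempty_of_sum_ne_zero (hBot ▸ hgap.ne'))
  have hTa : T - kp * a = δ * (a - b) := by
    rw [← hTop, sum_sub_distrib, sum_const, nsmul_eq_mul, hT, hTop_eq, hkp]
  have hBb : km * b - B = δ * (a - b) := by
    rw [← hBot, sum_sub_distrib, sum_const, nsmul_eq_mul, hB, hBot_eq, hkm]
  have hDpos : 0 < D := by rw [hD]; positivity
  subst hD
  exact ⟨hkp1, hkm1, eq_of_gadget_stationary hTa hBb hDpos.ne'⟩
end
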